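/- Every zero of Δ(λ) = e^{-iλ}(1+iλ) − e^{iλ}(1−iλ) is real. -/

import Mathlib

/-!
Δ(λ) = -2i (sin λ - λ cos λ), so a zero satisfies sin λ = λ cos λ. Combining this with its
complex conjugate through the addition formulas gives, with `c = |cos λ|²` and `λ = x + iy`,
`sin 2x = 2x c` and `sinh 2y = 2y c`. If `y ≠ 0`, the second identity forces `c > 1`, and then
the first forces `x = 0`, since `|sin t| < |t|` for `t ≠ 0`. On the imaginary axis the equation
reads `sinh y = y cosh y`, i.e. `tanh y = y`, whose only solution is `y = 0`.
-/

open Complex ComplexConjugate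

namespace Real

theorem mul_cosh_sub_sinh_strictMono : StrictMono fun x => x * cosh x - sinh x := by
  refine strictMono_of_odd_strictMonoOn_nonneg (fun x => by simp; ring) ?_
  refine strictMonoOn_of_deriv_pos (convex_Ici _) (by fun_prop) fun x hx => ?_
  rw [interior_Ici, Set.mem_Ioi] at hx
  have hderiv : HasDerivAt (fun x => x * cosh x - sinh x) (x * sinh x) x :=
    (((hasDerivAt_id' x).mul (hasDerivAt_cosh x)).sub (hasDerivAt_sinh x)).congr_deriv (by ring)
  rw [hderiv.deriv]
  exact mul_pos hx (sinh_pos_iff.2 hx)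

theorem sinh_eq_mul_cosh_iff {x : ℝ} : sinh x = x * cosh x ↔ x = 0 := by
  rw [← mul_cosh_sub_sinh_strictMono.injective.eq_iff (b := 0)]
  simp only [zero_mul, sinh_zero, sub_zero]
  rw [sub_eq_zero, eq_comm]

theorem one_lt_of_sinh_eq_mul {x c : ℝ} (hx : x ≠ 0) (h : sinh x = x * c) : 1 < c := by
  rcases hx.lt_or_gt with hneg | hpos
  · nlinarith [sinh_lt_self_iff.2 hneg]
  · nlinarith [self_lt_sinh_iff.2 hpos]

theorem eq_zero_of_sin_eq_mul {x c : ℝ} (hc : 1 < c) (h : sin x = x * c) : x = 0 := by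
  by_contra hx
  have hlt := abs_sin_lt_abs hx
  rw [h, abs_mul, abs_of_pos (zero_lt_one.trans hc)] at hlt
  nlinarith [abs_pos.2 hx]

end Real

namespace Complex

variable {z : ℂ}

theorem exp_neg_I_mul_sub_exp_I_mul (z : ℂ) :
    exp (-I * z) * (1 + I * z) - exp (I * z) * (1 - I * z) = -2 * I * (sin z - z * cos z) := by
  simp only [sin, cos, neg_mul, mul_comm z I]
  field_simp
  linear_combination (exp (-(I * z)) - exp (I * z)) * I_sq

theorem sin_conj_eq_mul_cos_conj (h : sin z = z * cos z) : sin (conj z) = conj z * cos (conj z) := by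
  rw [sin_conj, cos_conj, ← map_mul, h]

theorem sin_two_mul_re_of_sin_eq_mul_cos (h : sin z = z * cos z) :
    Real.sin (2 * z.re) = 2 * z.re * normSq (cos z) := by
  have hsin : sin (z + conj z) = (z + conj z) * normSq (cos z) := by
    rw [sin_add, h, sin_conj_eq_mul_cos_conj h, cos_conj, ← mul_conj]
    ring
  rw [add_conj] at hsin
  exact_mod_cast hsin

theorem sinh_two_mul_im_of_sin_eq_mul_cos (h : sin z = z * cos z) :
    Real.sinh (2 * z.im) = 2 * z.im * normSq (cos z) := by
  have hsin : sin (z - conj z) = (z - conj z) * normSq (cos z) := by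
    rw [sin_sub, h, sin_conj_eq_mul_cos_conj h, cos_conj, ← mul_conj]
    ring
  rw [sub_conj, sin_mul_I, mul_right_comm, mul_left_inj' I_ne_zero] at hsin
  exact_mod_cast hsin

theorem sin_mul_I_eq_mul_cos_iff {y : ℝ} : sin (y * I) = y * I * cos (y * I) ↔ y = 0 := by
  rw [sin_mul_I, cos_mul_I, ← ofReal_sinh, ← ofReal_cosh, mul_right_comm,
    mul_left_inj' I_ne_zero, ← ofReal_mul, ofReal_inj, Real.sinh_eq_mul_cosh_iff]

end Complex

/-- Every zero of Δ(λ) = e^{-iλ}(1+iλ) − e^{iλ}(1−iλ) is real. -/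
theorem stmt3 (l : ℂ)
    (h : Complex.exp (-I * l) * (1 + I * l) - Complex.exp (I * l) * (1 - I * l) = 0) :
    l.im = 0 := by
  have hsin : sin l = l * cos l := by
    rw [exp_neg_I_mul_sub_exp_I_mul] at h
    simpa [sub_eq_zero, I_ne_zero] using h
  by_contra him
  have hc : 1 < normSq (cos l) :=
    Real.one_lt_of_sinh_eq_mul (by simpa using him) (sinh_two_mul_im_of_sin_eq_mul_cos hsin)
  have hre : l.re = 0 := by
    simpa using Real.eq_zero_of_sin_eq_mul hc (sin_two_mul_re_of_sin_eq_mul_cos hsin)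
  have hl : l = l.im * I := by simpa [hre] using (re_add_im l).symm
  rw [hl] at hsin
  exact him (sin_mul_I_eq_mul_cos_iff.1 hsin)
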